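/- Let AI be the chain complex of F2[U]-modules freely generated over F2[U] by y, b, c, Qy, Qb, Qc, with differential D(y) = Ub + Q(y + c), D(c) = Ub + Q(y + c), D(b) = 0, D(Qy) = QUb, D(Qc) = QUb, D(Qb) = 0, and gradings gr(y) = 1, gr(b) = 2, gr(c) = 1, gr(Qy) = 0, gr(Qb) = 1, gr(Qc) = 0 (U lowers gr by 2, D lowers gr by 1). (This is the involutive mapping cone AI_0^- for the left-handed trefoil, with y = Ua.) Then H(AI) ≅ F2[U]·[y + c] ⊕ F2[U]·[b] ⊕ F2·[Qb], where [y + c] (grading 1) and [b] (grading 2) generate free F2[U]-summands, U·[b] = Q·[y + c] = [Q(y + c)], and [Qb] is a U-torsion class in grading 1. Consequently V̲_0 = -(1/2)(1 - 1) = 0 and V̄_0 = -(1/2)(2) = -1 for the left-handed trefoil. -/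

import Mathlib

/- STATEMENT 5: the involutive mapping cone AI_0^- of the left-handed
trefoil (generators y = Ua, b, c, Qy, Qb, Qc with
D(y) = Ub + Q(y+c), D(c) = Ub + Q(y+c), D(b) = 0, D(Qy) = QUb, D(Qc) = QUb,
D(Qb) = 0, gradings gr(y) = 1, gr(b) = 2, gr(c) = 1, gr(Qy) = 0,
gr(Qb) = 1, gr(Qc) = 0) has homology F2[U]·[y+c] ⊕ F2[U]·[b] ⊕ F2·[Qb],
with U·[b] = Q·[y+c] and [Qb] U-torsion of grading 1; consequently
V̲_0 = 0 and V̄_0 = -1 for the left-handed trefoil. -/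

open Polynomial

noncomputable section

/-- F2[U] -/
abbrev R2 : Type := Polynomial (ZMod 2)

/-- the variable U -/
def UU : R2 := Polynomial.X

/-- the i-th free generator -/
def gen {n : ℕ} (i : Fin n) : Fin n → R2 := Pi.single i 1

/-- the F2[U]-linear map sending the i-th generator to `v i` -/
def mkD {n : ℕ} (v : Fin n → (Fin n → R2)) : (Fin n → R2) →ₗ[R2] (Fin n → R2) :=
  (Pi.basisFun R2 (Fin n)).constr ℕ v

/-- `x` is homogeneous of degree `r`, where the i-th generator has
degree `M i` and multiplication by U lowers degree by 2. -/
def Homog {n : ℕ} (M : Fin n → ℤ) (r : ℤ) (x : Fin n → R2) : Prop :=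
  ∀ i : Fin n, ∀ k : ℕ, (x i).coeff k ≠ 0 → M i - 2 * (k : ℤ) = r

/- generators: y = 0, b = 1, c = 2, Qy = 3, Qb = 4, Qc = 5 -/

/-- the differential D of AI_0^- for the left-handed trefoil -/
def D : (Fin 6 → R2) →ₗ[R2] (Fin 6 → R2) :=
  mkD ![UU • gen 1 + gen 3 + gen 5, 0, UU • gen 1 + gen 3 + gen 5,
        UU • gen 4, 0, UU • gen 4]

/-- the action of Q: Q·(ξ + Qη) = Qξ -/
def Qm : (Fin 6 → R2) →ₗ[R2] (Fin 6 → R2) :=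
  mkD ![gen 3, gen 4, gen 5, 0, 0, 0]

/-- gradings gr(y) = 1, gr(b) = 2, gr(c) = 1, gr(Qy) = 0, gr(Qb) = 1,
gr(Qc) = 0 -/
def gr : Fin 6 → ℤ := ![1, 2, 1, 0, 1, 0]

section aux

lemma my_add_eq_zero (a b : R2) : a + b = 0 ↔ a = b := by
  constructor
  · intro h
    rw [add_eq_zero_iff_eq_neg, CharTwo.neg_eq] at h; exact h
  · intro h; rw [h, CharTwo.add_self_eq_zero]

@[simp] lemma cons_val_five {α : Type*} {m : ℕ} (x : α) (u : Fin (m+5) → α) :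
    Matrix.vecCons x u 5 = Matrix.vecHead (Matrix.vecTail (Matrix.vecTail (Matrix.vecTail (Matrix.vecTail u)))) :=
  rfl

lemma mkD_apply {n : ℕ} (v : Fin n → (Fin n → R2)) (x : Fin n → R2) :
    mkD v x = ∑ i, x i • v i := by
  simp [mkD, Module.Basis.constr_apply_fintype]

lemma D_coord (z : Fin 6 → R2) (j : Fin 6) :
    D z j = ![0, UU * (z 0 + z 2), 0, z 0 + z 2, UU * (z 3 + z 5), z 0 + z 2] j := by
  rw [D, mkD_apply, Fin.sum_univ_six]
  fin_cases j <;>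
    simp [gen, Pi.single_apply, UU] <;> ring

lemma Qm_coord (z : Fin 6 → R2) (j : Fin 6) :
    Qm z j = ![0, 0, 0, z 0, z 1, z 2] j := by
  rw [Qm, mkD_apply, Fin.sum_univ_six]
  fin_cases j <;> simp [gen, Pi.single_apply]

lemma zmod2_add_eq_zero (a b : ZMod 2) : a + b = 0 ↔ a = b := by revert a b; decide

lemma mem_range_iff (x : Fin 6 → R2) :
    x ∈ LinearMap.range D ↔
      x 0 = 0 ∧ x 2 = 0 ∧ x 1 = UU * x 3 ∧ x 5 = x 3 ∧ ∃ t, x 4 = UU * t := by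
  constructor
  · rintro ⟨z, rfl⟩
    refine ⟨by rw [D_coord]; rfl, by rw [D_coord]; rfl, ?_, ?_, ⟨z 3 + z 5, ?_⟩⟩ <;>
      simp [D_coord]
  · rintro ⟨h0, h2, h1, h5, t, h4⟩
    refine ⟨x 3 • gen 0 + t • gen 3, funext fun j => ?_⟩
    rw [D_coord]
    fin_cases j <;> simp [gen, Pi.single_apply] <;> simp_all

lemma ker_iff (z : Fin 6 → R2) : D z = 0 ↔ z 0 + z 2 = 0 ∧ z 3 + z 5 = 0 := by
  constructor
  · intro h
    have h3 := congrFun h 3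
    have h4 := congrFun h 4
    rw [D_coord] at h3 h4
    simp [UU] at h3 h4
    exact ⟨h3, h4⟩
  · rintro ⟨h1, h2⟩
    funext j
    rw [D_coord]
    fin_cases j <;> simp [h1, h2]


lemma B1 : D ∘ₗ D = 0 := by
  apply LinearMap.ext fun z => ?_
  rw [LinearMap.comp_apply, LinearMap.zero_apply, ker_iff]
  constructor <;> simp [D_coord, CharTwo.add_self_eq_zero]

lemma B2 : D (gen 0 + gen 2) = 0 := by
  rw [ker_iff]
  constructor <;> simp [gen, Pi.single_apply] <;> exact CharTwo.add_self_eq_zero 1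

lemma B3 : Homog gr 1 (gen 0 + gen 2) := by
  intro i k h
  fin_cases i <;> simp [gen, Pi.single_apply, Polynomial.coeff_one, gr] at h ⊢ <;> omega

lemma B4 : D (gen 1) = 0 := by
  rw [ker_iff]; constructor <;> simp [gen, Pi.single_apply]

lemma B5 : Homog gr 2 (gen 1) := by
  intro i k h
  fin_cases i <;> simp [gen, Pi.single_apply, Polynomial.coeff_one, gr] at h ⊢ <;> omega

lemma B6 : D (gen 4) = 0 := by
  rw [ker_iff]; constructor <;> simp [gen, Pi.single_apply]

lemma B7 : Homog gr 1 (gen 4) := by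
  intro i k h
  fin_cases i <;> simp [gen, Pi.single_apply, Polynomial.coeff_one, gr] at h ⊢ <;> omega

@[simp] lemma genv_0_0 : (gen (0:Fin 6)) 0 = 1 := rfl
@[simp] lemma genv_0_1 : (gen (0:Fin 6)) 1 = 0 := rfl
@[simp] lemma genv_0_2 : (gen (0:Fin 6)) 2 = 0 := rfl
@[simp] lemma genv_0_3 : (gen (0:Fin 6)) 3 = 0 := rfl
@[simp] lemma genv_0_4 : (gen (0:Fin 6)) 4 = 0 := rfl
@[simp] lemma genv_0_5 : (gen (0:Fin 6)) 5 = 0 := rfl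
@[simp] lemma genv_1_0 : (gen (1:Fin 6)) 0 = 0 := rfl
@[simp] lemma genv_1_1 : (gen (1:Fin 6)) 1 = 1 := rfl
@[simp] lemma genv_1_2 : (gen (1:Fin 6)) 2 = 0 := rfl
@[simp] lemma genv_1_3 : (gen (1:Fin 6)) 3 = 0 := rfl
@[simp] lemma genv_1_4 : (gen (1:Fin 6)) 4 = 0 := rfl
@[simp] lemma genv_1_5 : (gen (1:Fin 6)) 5 = 0 := rfl
@[simp] lemma genv_2_0 : (gen (2:Fin 6)) 0 = 0 := rfl
@[simp] lemma genv_2_1 : (gen (2:Fin 6)) 1 = 0 := rfl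
@[simp] lemma genv_2_2 : (gen (2:Fin 6)) 2 = 1 := rfl
@[simp] lemma genv_2_3 : (gen (2:Fin 6)) 3 = 0 := rfl
@[simp] lemma genv_2_4 : (gen (2:Fin 6)) 4 = 0 := rfl
@[simp] lemma genv_2_5 : (gen (2:Fin 6)) 5 = 0 := rfl
@[simp] lemma genv_3_0 : (gen (3:Fin 6)) 0 = 0 := rfl
@[simp] lemma genv_3_1 : (gen (3:Fin 6)) 1 = 0 := rfl
@[simp] lemma genv_3_2 : (gen (3:Fin 6)) 2 = 0 := rfl
@[simp] lemma genv_3_3 : (gen (3:Fin 6)) 3 = 1 := rfl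
@[simp] lemma genv_3_4 : (gen (3:Fin 6)) 4 = 0 := rfl
@[simp] lemma genv_3_5 : (gen (3:Fin 6)) 5 = 0 := rfl
@[simp] lemma genv_4_0 : (gen (4:Fin 6)) 0 = 0 := rfl
@[simp] lemma genv_4_1 : (gen (4:Fin 6)) 1 = 0 := rfl
@[simp] lemma genv_4_2 : (gen (4:Fin 6)) 2 = 0 := rfl
@[simp] lemma genv_4_3 : (gen (4:Fin 6)) 3 = 0 := rfl
@[simp] lemma genv_4_4 : (gen (4:Fin 6)) 4 = 1 := rfl
@[simp] lemma genv_4_5 : (gen (4:Fin 6)) 5 = 0 := rfl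
@[simp] lemma genv_5_0 : (gen (5:Fin 6)) 0 = 0 := rfl
@[simp] lemma genv_5_1 : (gen (5:Fin 6)) 1 = 0 := rfl
@[simp] lemma genv_5_2 : (gen (5:Fin 6)) 2 = 0 := rfl
@[simp] lemma genv_5_3 : (gen (5:Fin 6)) 3 = 0 := rfl
@[simp] lemma genv_5_4 : (gen (5:Fin 6)) 4 = 0 := rfl
@[simp] lemma genv_5_5 : (gen (5:Fin 6)) 5 = 1 := rfl

lemma divX_trick (p : R2) : p + C (p.coeff 0) = UU * p.divX := by
  have h := Polynomial.X_mul_divX_add p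
  rw [CharTwo.add_eq_iff_eq_add] at h
  rw [UU]
  exact h.symm

lemma B8 (z : Fin 6 → R2) (hz : D z = 0) :
    ∃! t : R2 × R2 × ZMod 2,
      z + t.1 • (gen 0 + gen 2) + t.2.1 • gen 1
        + (Polynomial.C t.2.2) • gen 4 ∈ LinearMap.range D := by
  rw [ker_iff] at hz
  obtain ⟨h02, h35⟩ := hz
  have h5 : z 5 = z 3 := ((my_add_eq_zero _ _).1 h35).symm
  have h2 : z 2 = z 0 := ((my_add_eq_zero _ _).1 h02).symm
  refine ⟨(z 0, UU * z 3 + z 1, (z 4).coeff 0), ?_, ?_⟩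
  · show z + z 0 • (gen 0 + gen 2) + (UU * z 3 + z 1) • gen 1
        + (Polynomial.C ((z 4).coeff 0)) • gen 4 ∈ LinearMap.range D
    rw [mem_range_iff]
    refine ⟨?_, ?_, ?_, ?_, ⟨(z 4).divX, ?_⟩⟩ <;>
      simp only [Pi.add_apply, Pi.smul_apply, genv_0_0, genv_0_1, genv_0_2, genv_0_3,
        genv_0_4, genv_0_5, genv_2_0, genv_2_1, genv_2_2, genv_2_3, genv_2_4, genv_2_5,
        genv_1_0, genv_1_1, genv_1_2, genv_1_3, genv_1_4, genv_1_5,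
        genv_4_0, genv_4_1, genv_4_2, genv_4_3, genv_4_4, genv_4_5,
        smul_eq_mul, mul_zero, mul_one, add_zero, zero_add, h2, h5]
    · exact CharTwo.add_self_eq_zero _
    · exact CharTwo.add_self_eq_zero _
    · rw [add_comm (UU * z 3) (z 1), ← add_assoc, CharTwo.add_self_eq_zero, zero_add]
    · exact divX_trick (z 4)
  · rintro ⟨t1, t2, t3⟩ ht
    rw [mem_range_iff] at ht
    simp only [Pi.add_apply, Pi.smul_apply, genv_0_0, genv_0_1, genv_0_2, genv_0_3,
      genv_0_4, genv_0_5, genv_2_0, genv_2_1, genv_2_2, genv_2_3, genv_2_4, genv_2_5,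
      genv_1_0, genv_1_1, genv_1_2, genv_1_3, genv_1_4, genv_1_5,
      genv_4_0, genv_4_1, genv_4_2, genv_4_3, genv_4_4, genv_4_5,
      smul_eq_mul, mul_zero, mul_one, add_zero, zero_add] at ht
    obtain ⟨e0, e2, e1, e5, t, e4⟩ := ht
    have ht1 : t1 = z 0 := ((my_add_eq_zero _ _).1 e0).symm
    have ht2 : t2 = UU * z 3 + z 1 := by
      rw [add_comm (z 1) t2, CharTwo.add_eq_iff_eq_add] at e1
      exact e1
    have ht3 : t3 = (z 4).coeff 0 := by
      have hc := congrArg (fun p => Polynomial.coeff p 0) e4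
      simp only [Polynomial.coeff_add, Polynomial.coeff_C, if_pos rfl] at hc
      rw [UU, Polynomial.mul_coeff_zero, Polynomial.coeff_X_zero, zero_mul] at hc
      exact ((zmod2_add_eq_zero _ _).1 hc).symm
    simp [Prod.ext_iff, ht1, ht2, ht3]

lemma B9 : UU • gen 1 + Qm (gen 0 + gen 2) ∈ LinearMap.range D := by
  rw [mem_range_iff]
  refine ⟨?_, ?_, ?_, ?_, ⟨0, ?_⟩⟩ <;>
    simp [Qm_coord, smul_eq_mul]

lemma B10 : UU • gen 4 ∈ LinearMap.range D := by
  rw [mem_range_iff]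
  refine ⟨?_, ?_, ?_, ?_, ⟨1, ?_⟩⟩ <;> simp

lemma Xpow_ne (n : ℕ) : (UU : R2) ^ n ≠ 0 := pow_ne_zero n Polynomial.X_ne_zero

lemma B11 : IsGreatest {r : ℤ | ∃ z : Fin 6 → R2, D z = 0 ∧ Homog gr r z ∧
      ∀ n : ℕ, UU ^ n • z ∉ LinearMap.range D ∧
        ¬ ∃ w : Fin 6 → R2, D w = 0 ∧ UU ^ n • z + Qm w ∈ LinearMap.range D} 1 := by
  constructor
  · refine ⟨gen 0 + gen 2, B2, B3, fun n => ⟨?_, ?_⟩⟩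
    · intro hmem
      rw [mem_range_iff] at hmem
      have h := hmem.1
      simp only [Pi.smul_apply, Pi.add_apply, genv_0_0, genv_2_0, smul_eq_mul,
        mul_one, mul_zero, add_zero] at h
      exact Xpow_ne n h
    · rintro ⟨w, hw, hmem⟩
      rw [mem_range_iff] at hmem
      have h := hmem.1
      simp only [Pi.add_apply, Pi.smul_apply, Qm_coord, Matrix.cons_val_zero,
        genv_0_0, genv_2_0, smul_eq_mul, mul_one, mul_zero, add_zero] at h
      exact Xpow_ne n h
  · rintro r ⟨z, hz, hom, hp⟩
    rw [ker_iff] at hz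
    obtain ⟨h02, h35⟩ := hz
    have h5 : z 5 = z 3 := ((my_add_eq_zero _ _).1 h35).symm
    by_cases h0 : z 0 = 0
    · exfalso
      have h2 : z 2 = 0 := by rw [h0, zero_add] at h02; exact h02
      apply (hp 1).2
      refine ⟨(z 1 + UU * z 3) • (gen 0 + gen 2) + (UU * z 4) • gen 1, ?_, ?_⟩
      · rw [ker_iff]
        constructor <;> simp [smul_eq_mul, CharTwo.add_self_eq_zero]
      · rw [mem_range_iff]
        refine ⟨?_, ?_, ?_, ?_, ⟨0, ?_⟩⟩ <;>
          simp only [Pi.add_apply, Pi.smul_apply, Qm_coord, pow_one,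
            genv_0_0, genv_0_1, genv_0_2, genv_0_3, genv_0_4, genv_0_5,
            genv_2_0, genv_2_1, genv_2_2, genv_2_3, genv_2_4, genv_2_5,
            genv_1_0, genv_1_1, genv_1_2, genv_1_3, genv_1_4, genv_1_5,
            Matrix.cons_val_zero, Matrix.cons_val_one, Matrix.head_cons,
            Matrix.cons_val_two, Matrix.cons_val_three, Matrix.cons_val_four,
            cons_val_five, Matrix.tail_cons, Matrix.head_cons,
            smul_eq_mul, mul_zero, mul_one, add_zero, zero_add, h0, h2, h5]
        · rw [add_comm (z 1) (UU * z 3), ← add_assoc, CharTwo.add_self_eq_zero, zero_add]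
        · exact CharTwo.add_self_eq_zero _
    · obtain ⟨k, hk⟩ : ∃ k, (z 0).coeff k ≠ 0 := by
        by_contra hc
        push_neg at hc
        exact h0 (Polynomial.ext fun k => by simpa using hc k)
      have := hom 0 k hk
      simp only [gr, Matrix.cons_val_zero] at this
      omega

lemma B13 : IsGreatest {r : ℤ | ∃ z : Fin 6 → R2, D z = 0 ∧ Homog gr r z ∧
      (∀ n : ℕ, UU ^ n • z ∉ LinearMap.range D) ∧
      ∃ m : ℕ, ∃ w : Fin 6 → R2, D w = 0 ∧
        UU ^ m • z + Qm w ∈ LinearMap.range D} 2 := by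
  constructor
  · refine ⟨gen 1, B4, B5, fun n hmem => ?_, 1, gen 0 + gen 2, B2, ?_⟩
    · rw [mem_range_iff] at hmem
      have h := hmem.2.2.1
      simp only [Pi.smul_apply, genv_1_1, genv_1_3, smul_eq_mul, mul_one, mul_zero] at h
      exact Xpow_ne n h
    · rw [pow_one]
      exact B9
  · rintro r ⟨z, hz, hom, hn, -⟩
    have hz0 : z ≠ 0 := by
      intro h
      apply hn 0
      rw [h, smul_zero]
      exact ⟨0, map_zero D⟩
    obtain ⟨i, hi⟩ : ∃ i, z i ≠ 0 := by
      by_contra hc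
      push_neg at hc
      exact hz0 (funext fun i => hc i)
    obtain ⟨k, hk⟩ : ∃ k, (z i).coeff k ≠ 0 := by
      by_contra hc
      push_neg at hc
      exact hi (Polynomial.ext fun k => by simpa using hc k)
    have := hom i k hk
    fin_cases i <;> simp [gr] at this <;> omega

end aux


theorem stmt_5 :
    -- AI is a chain complex
    D ∘ₗ D = 0 ∧
    -- y + c is a cycle, homogeneous of grading 1
    D (gen 0 + gen 2) = 0 ∧ Homog gr 1 (gen 0 + gen 2) ∧
    -- b is a cycle, homogeneous of grading 2
    D (gen 1) = 0 ∧ Homog gr 2 (gen 1) ∧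
    -- Qb is a cycle, homogeneous of grading 1
    D (gen 4) = 0 ∧ Homog gr 1 (gen 4) ∧
    -- H(AI) ≅ F2[U]·[y+c] ⊕ F2[U]·[b] ⊕ F2·[Qb]
    (∀ z : Fin 6 → R2, D z = 0 →
      ∃! t : R2 × R2 × ZMod 2,
        z + t.1 • (gen 0 + gen 2) + t.2.1 • gen 1
          + (Polynomial.C t.2.2) • gen 4 ∈ LinearMap.range D) ∧
    -- U·[b] = Q·[y + c] = [Q(y + c)]
    UU • gen 1 + Qm (gen 0 + gen 2) ∈ LinearMap.range D ∧
    -- [Qb] is U-torsion: U·[Qb] = 0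
    UU • gen 4 ∈ LinearMap.range D ∧
    -- V̲_0: max{ r : ∃ x ∈ H_r, U^n x ≠ 0 and U^n x ∉ Im Q for all n } = 1
    IsGreatest {r : ℤ | ∃ z : Fin 6 → R2, D z = 0 ∧ Homog gr r z ∧
      ∀ n : ℕ, UU ^ n • z ∉ LinearMap.range D ∧
        ¬ ∃ w : Fin 6 → R2, D w = 0 ∧ UU ^ n • z + Qm w ∈ LinearMap.range D}
      1 ∧
    (-(1 : ℚ) / 2) * (1 - 1) = 0 ∧
    -- V̄_0: max{ r : ∃ x ∈ H_r, U^n x ≠ 0 for all n, and U^m x ∈ Im Q for some m } = 2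
    IsGreatest {r : ℤ | ∃ z : Fin 6 → R2, D z = 0 ∧ Homog gr r z ∧
      (∀ n : ℕ, UU ^ n • z ∉ LinearMap.range D) ∧
      ∃ m : ℕ, ∃ w : Fin 6 → R2, D w = 0 ∧
        UU ^ m • z + Qm w ∈ LinearMap.range D} 2 ∧
    (-(1 : ℚ) / 2) * 2 = -1 := by
  exact ⟨B1, B2, B3, B4, B5, B6, B7, B8, B9, B10, B11, by norm_num, B13, by norm_num⟩
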